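/- arXiv:1102.5309 — 2 statements merged into one kernel-verified Lean document; each statement's English description precedes it below -/
import Mathlib

section
/- Let H be a graph with maximum degree Δ ≥ 1, let W be an upper bound on the size of every minimal witness against BUC(H), and let c > 1 and ε > 0. Let G̃ be a graph on N vertices whose vertex set is partitioned into clusters V^i_j (grouped into groups V^i = ⋃_j V^i_j) and a set L such that: every vertex of L is isolated in G̃; G̃ has no edges between distinct groups; any two vertices in the same cluster have identical neighborhoods in G̃; and every cluster satisfies εN/(16Δ) < |V^i_j| ≤ 2cεN. Suppose G̃ is (ε/8)-close to the set of graphs of maximum degree at most 2cεN and is (3ε/8)-far from BUC(H). Then there exist at least 1/(16Wc²ε) pairwise disjoint sets W̃₁, W̃₂, …, each of which is a union of at most W clusters belonging to a single group, such that for each k the subgraph of G̃ induced by W̃_k is not a blow-up collection of H. -/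
/-!
Greedy construction. Suppose `m < 1/(16Wc²ε)` disjoint witnesses have been found, each a union
of at most `W` clusters, so that their union `T` has at most `m · W · 2cεN` vertices. Deleting
every edge at `T` costs at most `|T| · 2cεN + εN²/8 ≤ 3εN²/8` edits (an edge of `G̃` at `T` is
either an edge of the low-degree graph `G'` at `T` or an edge of `G̃ ∆ G'`), so the resulting
graph is not a blow-up collection; as `T` is isolated in it, neither is `G̃[V ∖ T]`. A minimal
witness `S ⊆ V ∖ T` has at most `W` vertices, and it lies inside one group: otherwise its
intersections with the groups are proper subsets, hence blow-up collections, and then so is `S`,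
which has no edges between groups. The clusters meeting `S` form the next witness, which avoids `T`
because `T` is a union of clusters.
-/

open SimpleGraph

/-- `G` is a blow-up of `H`. -/
def IsBlowUp {α β : Type*} (H : SimpleGraph β) (G : SimpleGraph α) : Prop :=
  ∃ f : α → β, ∀ u v : α, G.Adj u v ↔ H.Adj (f u) (f v)

/-- `G` is a blow-up collection of `H`. -/
def IsBlowUpCollection {α β : Type*} (H : SimpleGraph β) (G : SimpleGraph α) : Prop :=
  ∃ P : α → ℕ, (∀ u v : α, G.Adj u v → P u = P v) ∧
    ∀ n : ℕ, IsBlowUp H (G.induce {v | P v = n})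

/-- edit distance between two graphs on the same vertex set -/
noncomputable def graphDist {α : Type*} (G G' : SimpleGraph α) : ℕ :=
  (symmDiff G.edgeSet G'.edgeSet).ncard

open Function

section

variable {α α' β : Type*} {H : SimpleGraph β} {G : SimpleGraph α}

theorem IsBlowUp.comap (f : α' → α) (h : IsBlowUp H G) : IsBlowUp H (G.comap f) := by
  obtain ⟨g, hg⟩ := h
  exact ⟨g ∘ f, fun u v => hg (f u) (f v)⟩

theorem IsBlowUpCollection.comap (f : α' → α) (h : IsBlowUpCollection H G) :
    IsBlowUpCollection H (G.comap f) := by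
  obtain ⟨P, hP, hblow⟩ := h
  exact ⟨P ∘ f, fun u v huv => hP _ _ huv,
    fun n => (hblow n).comap fun x : {v | P (f v) = n} => (⟨f x, x.2⟩ : {v | P v = n})⟩

theorem IsBlowUpCollection.induce_of_subset {s t : Set α} (hst : s ⊆ t)
    (h : IsBlowUpCollection H (G.induce t)) : IsBlowUpCollection H (G.induce s) :=
  h.comap (Set.inclusion hst)

theorem SimpleGraph.Iso.isBlowUpCollection_iff {G' : SimpleGraph α'} (φ : G ≃g G') :
    IsBlowUpCollection H G ↔ IsBlowUpCollection H G' := by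
  have hG : G = G'.comap φ := by ext u v; exact φ.map_adj_iff.symm
  have hG' : G' = G.comap φ.symm := by ext u v; exact φ.symm.map_adj_iff.symm
  exact ⟨fun h => hG' ▸ h.comap _, fun h => hG ▸ h.comap _⟩

theorem isBlowUpCollection_bot [Nonempty β] : IsBlowUpCollection H (⊥ : SimpleGraph α) := by
  obtain ⟨b⟩ := ‹Nonempty β›
  exact ⟨fun _ => 0, by simp, fun n => by rw [induce_bot]; exact ⟨fun _ => b, by simp⟩⟩

theorem IsBlowUpCollection.of_fibers {ι : Type*} [Countable ι] (q : α → ι)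
    (hq : ∀ u v, G.Adj u v → q u = q v) (h : ∀ i, IsBlowUpCollection H (G.induce {v | q v = i})) :
    IsBlowUpCollection H G := by
  classical
  obtain ⟨e, he⟩ := Countable.exists_injective_nat ι
  choose P hP hblow using h
  let P' (i : ι) (v : α) : ℕ := if hv : q v = i then P i ⟨v, hv⟩ else 0
  -- the part of `v` is (its fibre, its part within the fibre), encoded by `Nat.pair`
  let R (v : α) : ℕ := Nat.pair (e (q v)) (P' (q v) v)
  refine ⟨R, fun u v huv => ?_, fun n => ?_⟩
  · have hP' : P' (q u) u = P' (q u) v := by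
      simp only [P', dif_pos rfl, dif_pos (hq u v huv).symm]
      exact hP _ ⟨u, rfl⟩ ⟨v, _⟩ huv
    change Nat.pair (e (q u)) (P' (q u) u) = Nat.pair (e (q v)) (P' (q v) v)
    rw [hP', hq u v huv]
  rcases isEmpty_or_nonempty {v | R v = n} with hempty | ⟨v₀, hv₀⟩
  · exact ⟨isEmptyElim, isEmptyElim⟩
  have hfiber : ∀ v ∈ {v | R v = n}, ∃ hv : q v = q v₀, P (q v₀) ⟨v, hv⟩ = P' (q v₀) v₀ := by
    intro v hv
    obtain ⟨he', hP'⟩ := Nat.pair_eq_pair.1 (hv.trans hv₀.symm)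
    have hqv := he he'
    exact ⟨hqv, by simpa [P', hqv] using hP'⟩
  exact (hblow (q v₀) (P' (q v₀) v₀)).comap fun x : {v | R v = n} =>
    (⟨⟨x, (hfiber x x.2).1⟩, (hfiber x x.2).2⟩ : {w : {v | q v = q v₀} | P (q v₀) w = P' (q v₀) v₀})

theorem deleteEdges_incidenceSet_adj {T : Set α} {u v : α} :
    (G.deleteEdges (⋃ w ∈ T, G.incidenceSet w)).Adj u v ↔ G.Adj u v ∧ u ∉ T ∧ v ∉ T := by
  simp only [deleteEdges_adj, Set.mem_iUnion, incidenceSet, Set.mem_ofPred_eq, mem_edgeSet,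
    Sym2.mem_iff, exists_prop, not_exists, not_and]
  grind

theorem IsBlowUpCollection.deleteEdges_incidenceSet [Nonempty β] {T : Set α}
    (h : IsBlowUpCollection H (G.induce Tᶜ)) :
    IsBlowUpCollection H (G.deleteEdges (⋃ v ∈ T, G.incidenceSet v)) := by
  refine .of_fibers (· ∈ T) (fun u v huv => ?_) fun i => ?_
  · obtain ⟨-, hu, hv⟩ := deleteEdges_incidenceSet_adj.1 huv
    simp [hu, hv]
  obtain rfl | rfl := Classical.propComplete i
  · rw [show {v | (v ∈ T) = True} = T by ext; simp]
    convert isBlowUpCollection_bot (H := H)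
    rw [eq_bot_iff_forall_not_adj]
    exact fun u v huv => (deleteEdges_incidenceSet_adj.1 huv).2.1 u.2
  · rw [show {v | (v ∈ T) = False} = Tᶜ by ext; simp]
    convert h using 1
    ext u v
    exact deleteEdges_incidenceSet_adj.trans (and_iff_left ⟨u.2, v.2⟩)

theorem Finset.ncard_biUnion_le_card_mul {ι : Type*} (s : Finset ι) (t : ι → Set α) {d : ℝ}
    (h : ∀ i ∈ s, ((t i).ncard : ℝ) ≤ d) : ((⋃ i ∈ s, t i).ncard : ℝ) ≤ s.card * d :=
  calc ((⋃ i ∈ s, t i).ncard : ℝ) ≤ ∑ i ∈ s, ((t i).ncard : ℝ) := mod_cast s.set_ncard_biUnion_le t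
    _ ≤ ∑ _i ∈ s, d := Finset.sum_le_sum h
    _ = s.card * d := by rw [Finset.sum_const, nsmul_eq_mul]

theorem graphDist_deleteEdges_incidenceSet_le [Finite α] (T : Set α) {G' : SimpleGraph α} {d : ℝ}
    (hd : ∀ v, ((G'.neighborSet v).ncard : ℝ) ≤ d) :
    (graphDist G (G.deleteEdges (⋃ v ∈ T, G.incidenceSet v)) : ℝ) ≤
      T.ncard * d + graphDist G G' := by
  have hdist : graphDist G (G.deleteEdges (⋃ v ∈ T, G.incidenceSet v)) =
      (⋃ v ∈ T, G.incidenceSet v).ncard := by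
    have hX : ⋃ v ∈ T, G.incidenceSet v ⊆ G.edgeSet :=
      Set.iUnion₂_subset fun v _ => G.incidenceSet_subset v
    rw [graphDist, edgeSet_deleteEdges, symmDiff_of_ge sdiff_le, sdiff_sdiff_right_self,
      inf_eq_right.2 hX]
  have hsub : ⋃ v ∈ T, G.incidenceSet v ⊆
      (⋃ v ∈ T, G'.incidenceSet v) ∪ symmDiff G.edgeSet G'.edgeSet := by
    intro e he
    obtain ⟨v, hv, heG, hve⟩ := Set.mem_iUnion₂.1 he
    by_cases heG' : e ∈ G'.edgeSet
    · exact .inl (Set.mem_iUnion₂.2 ⟨v, hv, heG', hve⟩)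
    · exact .inr (.inl ⟨heG, heG'⟩)
  have hT : ((⋃ v ∈ T, G'.incidenceSet v).ncard : ℝ) ≤ T.ncard * d := by
    have hfin := T.toFinite
    rw [Set.ncard_eq_toFinset_card T hfin]
    convert hfin.toFinset.ncard_biUnion_le_card_mul G'.incidenceSet fun v _ => ?_ using 3
    · simp
    · classical
      rw [← Nat.card_coe_set_eq, Nat.card_congr (G'.incidenceSetEquivNeighborSet v),
        Nat.card_coe_set_eq]
      exact hd v
  calc (graphDist G (G.deleteEdges (⋃ v ∈ T, G.incidenceSet v)) : ℝ)
      ≤ (((⋃ v ∈ T, G'.incidenceSet v) ∪ symmDiff G.edgeSet G'.edgeSet).ncard : ℝ) :=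
        mod_cast hdist ▸ Set.ncard_le_ncard hsub
    _ ≤ ((⋃ v ∈ T, G'.incidenceSet v).ncard : ℝ) + graphDist G G' :=
        mod_cast Set.ncard_union_le _ _
    _ ≤ T.ncard * d + graphDist G G' := by gcongr

theorem not_isBlowUpCollection_induce_compl [Nonempty β] [Finite α] {G' : SimpleGraph α}
    {T : Set α} {d δ : ℝ} (hd : ∀ v, ((G'.neighborSet v).ncard : ℝ) ≤ d)
    (hfar : ∀ G'' : SimpleGraph α, IsBlowUpCollection H G'' → δ < graphDist G G'')
    (hT : T.ncard * d + graphDist G G' ≤ δ) : ¬ IsBlowUpCollection H (G.induce Tᶜ) := fun h =>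
  lt_irrefl δ <| (hfar _ h.deleteEdges_incidenceSet).trans_le <|
    (graphDist_deleteEdges_incidenceSet_le T hd).trans hT

variable (H G) in
def IsMinimalWitness (S : Set α) : Prop :=
  Minimal (fun S => ¬ IsBlowUpCollection H (G.induce S)) S

theorem exists_isMinimalWitness_subset [Finite α] {A : Set α}
    (hA : ¬ IsBlowUpCollection H (G.induce A)) : ∃ S ⊆ A, IsMinimalWitness H G S :=
  exists_minimal_le_of_wellFoundedLT _ A hA

theorem IsMinimalWitness.image_iso {G' : SimpleGraph α'} (φ : G ≃g G') {S : Set α}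
    (hS : IsMinimalWitness H G S) : IsMinimalWitness H G' (φ '' S) := by
  have key (A : Set α) : IsBlowUpCollection H (G'.induce (φ '' A)) ↔
      IsBlowUpCollection H (G.induce A) :=
    (φ.induce φ.injective.injOn.bijOn_image).isBlowUpCollection_iff.symm
  rw [IsMinimalWitness, Set.minimal_iff_forall_ssubset] at hS ⊢
  refine ⟨(key S).not.2 hS.1, fun t ht => ?_⟩
  rw [← Set.image_preimage_eq t φ.surjective] at ht ⊢
  rw [key]
  exact hS.2 <|
    (φ.injective.injOn.image_ssubset_image_iff (Set.subset_univ _) (Set.subset_univ _)).1 ht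

theorem IsMinimalWitness.ncard_le [Fintype α] {W : ℕ}
    (hW : ∀ (n : ℕ) (G : SimpleGraph (Fin n)) (S : Set (Fin n)),
      ¬ IsBlowUpCollection H (G.induce S) →
      (∀ S' : Set (Fin n), S' ⊂ S → IsBlowUpCollection H (G.induce S')) → S.ncard ≤ W)
    {S : Set α} (hS : IsMinimalWitness H G S) : S.ncard ≤ W := by
  have hS' := hS.image_iso (G.overFinIso rfl)
  rw [IsMinimalWitness, Set.minimal_iff_forall_ssubset] at hS'
  rw [← Set.ncard_image_of_injective S (G.overFinIso rfl).injective]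
  exact hW _ _ _ hS'.1 fun S' h => not_not.1 (hS'.2 h)

theorem IsMinimalWitness.apply_eq_apply {ι : Type*} [Countable ι] {q : α → ι}
    (hq : ∀ u v, G.Adj u v → q u = q v) {S : Set α} (hS : IsMinimalWitness H G S) {u v : α}
    (hu : u ∈ S) (hv : v ∈ S) : q u = q v := by
  by_contra hne
  refine hS.prop (.of_fibers (fun x : S => q x) (fun x y hxy => hq _ _ hxy) fun i => ?_)
  have hssub : {w ∈ S | q w = i} ⊂ S := by
    refine Set.ssubset_iff_subset_ne.2 ⟨Set.sep_subset _ _, fun h => hne ?_⟩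
    rw [← h] at hu hv
    exact hu.2.trans hv.2.symm
  exact (not_not.1 (hS.not_prop_of_ssubset hssub)).comap
    fun x : {x : S | q x = i} => (⟨x.1.1, x.1.2, x.2⟩ : {w ∈ S | q w = i})

theorem Nat.cast_mul_le_one_of_lt_ceil_one_div {a : ℝ} (ha : 0 ≤ a) {m : ℕ}
    (hm : m < ⌈1 / a⌉₊) : m * a ≤ 1 := by
  rcases ha.eq_or_lt with rfl | hpos
  · simp
  · exact ((lt_div_iff₀ hpos).1 (Nat.lt_ceil.1 hm)).le

theorem exists_pairwise_disjoint_of_exists_disjoint {p : Set α → Prop} (M : ℕ)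
    (h : ∀ m < M, ∀ A : Fin m → Set α, (∀ k, p (A k)) → ∃ B, p B ∧ Disjoint B (⋃ k, A k)) :
    ∃ A : Fin M → Set α, (∀ k, p (A k)) ∧ Pairwise (Disjoint on A) := by
  induction M with
  | zero => exact ⟨Fin.elim0, fun k => k.elim0, fun k => k.elim0⟩
  | succ M ih =>
    obtain ⟨A, hA, hdisj⟩ := ih fun m hm => h m (hm.trans M.lt_succ_self)
    obtain ⟨B, hB, hBA⟩ := h M M.lt_succ_self A hA
    refine ⟨Fin.cons B A, Fin.cases hB hA, ?_⟩
    have hBA' (k : Fin M) : Disjoint B (A k) := Set.disjoint_iUnion_right.1 hBA k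
    intro k l hkl
    cases k using Fin.cases <;> cases l using Fin.cases
    · exact absurd rfl hkl
    · simpa [Function.onFun] using hBA' _
    · simpa [Function.onFun] using (hBA' _).symm
    · simpa [Function.onFun] using hdisj (fun h => hkl (congrArg Fin.succ h))

section Clusters

variable {P : α → Option (ℕ × ℕ)}

def clusterUnion (P : α → Option (ℕ × ℕ)) (i : ℕ) (J : Finset ℕ) : Set α :=
  {v | ∃ j ∈ J, P v = some (i, j)}

theorem ncard_clusterUnion_le {s : ℝ} (hs : ∀ p, (({v | P v = some p}).ncard : ℝ) ≤ s)
    (i : ℕ) (J : Finset ℕ) : ((clusterUnion P i J).ncard : ℝ) ≤ J.card * s := by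
  have : clusterUnion P i J = ⋃ j ∈ J, {v | P v = some (i, j)} := by ext; simp [clusterUnion]
  rw [this]
  exact J.ncard_biUnion_le_card_mul _ fun j _ => hs (i, j)

theorem ncard_iUnion_le_of_forall_eq_clusterUnion {s : ℝ}
    (hs : ∀ p, (({v | P v = some p}).ncard : ℝ) ≤ s) (hs0 : 0 ≤ s) {m W : ℕ} {A : Fin m → Set α}
    (hA : ∀ k, ∃ i J, J.card ≤ W ∧ A k = clusterUnion P i J) :
    ((⋃ k, A k).ncard : ℝ) ≤ m * (W * s) := by
  have hAk (k : Fin m) : ((A k).ncard : ℝ) ≤ W * s := by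
    obtain ⟨i, J, hJ, hk⟩ := hA k
    rw [hk]
    exact (ncard_clusterUnion_le hs i J).trans (by gcongr)
  simpa using Finset.univ.ncard_biUnion_le_card_mul A fun k _ => hAk k

theorem mem_iUnion_of_forall_eq_clusterUnion {m W : ℕ} {A : Fin m → Set α}
    (hA : ∀ k, ∃ i J, J.card ≤ W ∧ A k = clusterUnion P i J) {u v : α} (huv : P u = P v)
    (hu : u ∈ ⋃ k, A k) : v ∈ ⋃ k, A k := by
  obtain ⟨k, hk⟩ := Set.mem_iUnion.1 hu
  obtain ⟨i, J, -, hAk⟩ := hA k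
  rw [hAk] at hk
  exact Set.mem_iUnion.2 ⟨k, hAk ▸ (show ∃ j ∈ J, P v = some (i, j) from huv ▸ hk)⟩

theorem IsMinimalWitness.exists_forall_mem_group [Nonempty β]
    (h1 : ∀ v, P v = none → G.neighborSet v = ∅)
    (h2 : ∀ u v i j i' j', P u = some (i, j) → P v = some (i', j') → i ≠ i' → ¬ G.Adj u v)
    {S : Set α} (hS : IsMinimalWitness H G S) : ∃ i, ∀ v ∈ S, ∃ j, P v = some (i, j) := by
  have hne {u v : α} (huv : G.Adj u v) : P u ≠ none := fun h =>
    Set.eq_empty_iff_forall_notMem.1 (h1 u h) v huv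
  have hq (u v : α) (huv : G.Adj u v) : (P u).map Prod.fst = (P v).map Prod.fst := by
    obtain ⟨⟨i, j⟩, hu⟩ := Option.ne_none_iff_exists'.1 (hne huv)
    obtain ⟨⟨i', j'⟩, hv⟩ := Option.ne_none_iff_exists'.1 (hne huv.symm)
    rw [hu, hv, Option.map_some, Option.map_some, Option.some_inj]
    by_contra hii
    exact h2 u v i j i' j' hu hv hii huv
  by_contra! hnone
  suffices G.induce S = ⊥ from hS.prop (this ▸ isBlowUpCollection_bot)
  refine eq_bot_iff_forall_not_adj.2 fun u v huv => ?_
  obtain ⟨⟨i, j⟩, hu⟩ := Option.ne_none_iff_exists'.1 (hne (u := u.1) (v := v.1) huv)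
  obtain ⟨w, hw, hwi⟩ := hnone i
  obtain ⟨⟨i', j'⟩, hw', rfl⟩ :=
    Option.map_eq_some_iff.1 ((hS.apply_eq_apply hq hw u.2).trans (by rw [hu]; rfl))
  exact hwi j' hw'

theorem exists_clusterUnion_not_isBlowUpCollection [Finite α] [Nonempty β]
    (h1 : ∀ v, P v = none → G.neighborSet v = ∅)
    (h2 : ∀ u v i j i' j', P u = some (i, j) → P v = some (i', j') → i ≠ i' → ¬ G.Adj u v)
    {W : ℕ}
    (hW : ∀ S, IsMinimalWitness H G S → S.ncard ≤ W) {T : Set α}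
    (hT : ∀ u v, P u = P v → u ∈ T → v ∈ T) (hTc : ¬ IsBlowUpCollection H (G.induce Tᶜ)) :
    ∃ i J, J.card ≤ W ∧ Disjoint (clusterUnion P i J) T ∧
      ¬ IsBlowUpCollection H (G.induce (clusterUnion P i J)) := by
  classical
  obtain ⟨S, hST, hS⟩ := exists_isMinimalWitness_subset hTc
  obtain ⟨i, hi⟩ := hS.exists_forall_mem_group h1 h2
  have hfin := S.toFinite
  let J := hfin.toFinset.image fun v => ((P v).getD 0).2
  have hSJ : S ⊆ clusterUnion P i J := fun v hv => by
    obtain ⟨j, hj⟩ := hi v hv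
    exact ⟨j, Finset.mem_image.2 ⟨v, hfin.mem_toFinset.2 hv, by simp [hj]⟩, hj⟩
  refine ⟨i, J, ?_, Set.disjoint_left.2 fun v hv hvT => ?_,
    fun h => hS.prop (h.induce_of_subset hSJ)⟩
  · calc J.card ≤ hfin.toFinset.card := Finset.card_image_le
      _ = S.ncard := (Set.ncard_eq_toFinset_card S hfin).symm
      _ ≤ W := hW S hS
  · obtain ⟨j, hj, hv⟩ := hv
    obtain ⟨u, hu, rfl⟩ := Finset.mem_image.1 hj
    obtain ⟨j', hu'⟩ := hi u (hfin.mem_toFinset.1 hu)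
    exact hST (hfin.mem_toFinset.1 hu) (hT v u (by simp [hv, hu']) hvT)

end Clusters

end

theorem many_distinct_witnesses_general {V β : Type*} [Fintype V] [Fintype β]
    (H : SimpleGraph β) [DecidableRel H.Adj] (hΔ : 1 ≤ H.maxDegree)
    (W : ℕ)
    (hW : ∀ (n : ℕ) (G : SimpleGraph (Fin n)) (S : Set (Fin n)),
      ¬ IsBlowUpCollection H (G.induce S) →
      (∀ S' : Set (Fin n), S' ⊂ S → IsBlowUpCollection H (G.induce S')) →
      S.ncard ≤ W)
    (c ε : ℝ) (hc : 1 < c) (hε : 0 < ε)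
    (Gt : SimpleGraph V) (N : ℕ)
    (P : V → Option (ℕ × ℕ))
    -- leftover vertices are isolated in G̃
    (h1 : ∀ v : V, P v = none → Gt.neighborSet v = ∅)
    -- no edges of G̃ between distinct groups
    (h2 : ∀ (u v : V) (i j i' j' : ℕ), P u = some (i, j) → P v = some (i', j') → i ≠ i' →
      ¬ Gt.Adj u v)
    -- every (nonempty) cluster has more than εN/(16Δ) and at most 2cεN vertices
    (h4 : ∀ p : ℕ × ℕ, {v : V | P v = some p}.Nonempty →
      ε * N / (16 * (H.maxDegree : ℝ)) < (({v : V | P v = some p}).ncard : ℝ) ∧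
      (({v : V | P v = some p}).ncard : ℝ) ≤ 2 * c * ε * N)
    -- G̃ is ε/8-close to having maximum degree 2cεN
    (hLD : ∃ G' : SimpleGraph V, (∀ v : V, ((G'.neighborSet v).ncard : ℝ) ≤ 2 * c * ε * N) ∧
      (graphDist Gt G' : ℝ) ≤ ε / 8 * N ^ 2)
    -- G̃ is 3ε/8-far from BUC(H)
    (hfar : ∀ G' : SimpleGraph V, IsBlowUpCollection H G' →
      3 * ε / 8 * N ^ 2 < (graphDist Gt G' : ℝ)) :
    ∃ (M : ℕ) (Ws : Fin M → Set V),
      1 / (16 * (W : ℝ) * c ^ 2 * ε) ≤ (M : ℝ) ∧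
      (∀ k l : Fin M, k ≠ l → Disjoint (Ws k) (Ws l)) ∧
      (∀ k : Fin M, ∃ (i : ℕ) (J : Finset ℕ), J.card ≤ W ∧
        Ws k = {v : V | ∃ j ∈ J, P v = some (i, j)}) ∧
      (∀ k : Fin M, ¬ IsBlowUpCollection H (Gt.induce (Ws k))) := by
  have : Nonempty β := not_isEmpty_iff.1 fun _ => by simp [maxDegree_of_subsingleton] at hΔ
  have hc0 : 0 < c := by linarith
  have hs0 : 0 ≤ 2 * c * ε * N := by positivity
  have hcluster (p : ℕ × ℕ) : (({v | P v = some p}).ncard : ℝ) ≤ 2 * c * ε * N := by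
    rcases Set.eq_empty_or_nonempty {v | P v = some p} with he | hne
    · simpa [he] using hs0
    · exact (h4 p hne).2
  obtain ⟨G', hdeg, hdist⟩ := hLD
  refine (exists_pairwise_disjoint_of_exists_disjoint
    (p := fun A => (∃ i J, J.card ≤ W ∧ A = clusterUnion P i J) ∧
      ¬ IsBlowUpCollection H (Gt.induce A)) ⌈1 / (16 * (W : ℝ) * c ^ 2 * ε)⌉₊ ?_).elim
    fun Ws ⟨hWs, hdisj⟩ => ⟨_, Ws, Nat.le_ceil _, hdisj, fun k => (hWs k).1, fun k => (hWs k).2⟩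
  intro m hm Ws hWs
  have hsmall : ((⋃ k, Ws k).ncard : ℝ) * (2 * c * ε * N) + graphDist Gt G' ≤ 3 * ε / 8 * N ^ 2 :=
    calc ((⋃ k, Ws k).ncard : ℝ) * (2 * c * ε * N) + graphDist Gt G'
        ≤ m * (W * (2 * c * ε * N)) * (2 * c * ε * N) + ε / 8 * N ^ 2 := by
          gcongr
          exact ncard_iUnion_le_of_forall_eq_clusterUnion hcluster hs0 fun k => (hWs k).1
      _ = m * (16 * W * c ^ 2 * ε) * (ε / 4 * N ^ 2) + ε / 8 * N ^ 2 := by ring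
      _ ≤ 1 * (ε / 4 * N ^ 2) + ε / 8 * N ^ 2 := by
          gcongr
          exact Nat.cast_mul_le_one_of_lt_ceil_one_div (by positivity) hm
      _ = 3 * ε / 8 * N ^ 2 := by ring
  obtain ⟨i, J, hJ, hdisjT, hbad⟩ := exists_clusterUnion_not_isBlowUpCollection h1 h2
    (fun S hS => hS.ncard_le hW)
    (fun u v => mem_iUnion_of_forall_eq_clusterUnion fun k => (hWs k).1)
    (not_isBlowUpCollection_induce_compl hdeg hfar hsmall)
  exact ⟨_, ⟨⟨i, J, hJ, rfl⟩, hbad⟩, hdisjT⟩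

/-- Lemma 4 (many distinct witnesses): Let `G̃` be a graph on `N` vertices partitioned into
clusters `V^i_j` (encoded by `P`; leftovers labelled `none`) satisfying the structural
conclusions of the blow-up construction lemma, with every cluster of size at most `2cεN`.
If `G̃` is `ε/8`-close to having maximum degree `2cεN` and `3ε/8`-far from `BUC(H)`, and `W`
bounds the size of every minimal witness against `BUC(H)`, then there are at least
`1/(16Wc²ε)` pairwise disjoint sets, each a union of at most `W` clusters of a single group,
each of which induces a subgraph of `G̃` that is not a blow-up collection of `H`. -/
theorem many_distinct_witnesses {V β : Type*} [Fintype V] [Fintype β]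
    (H : SimpleGraph β) [DecidableRel H.Adj] (hΔ : 1 ≤ H.maxDegree)
    (W : ℕ)
    (hW : ∀ (n : ℕ) (G : SimpleGraph (Fin n)) (S : Set (Fin n)),
      ¬ IsBlowUpCollection H (G.induce S) →
      (∀ S' : Set (Fin n), S' ⊂ S → IsBlowUpCollection H (G.induce S')) →
      S.ncard ≤ W)
    (c ε : ℝ) (hc : 1 < c) (hε : 0 < ε)
    (Gt : SimpleGraph V) (N : ℕ) (hN : N = Fintype.card V)
    (P : V → Option (ℕ × ℕ))
    -- leftover vertices are isolated in G̃
    (h1 : ∀ v : V, P v = none → Gt.neighborSet v = ∅)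
    -- no edges of G̃ between distinct groups
    (h2 : ∀ (u v : V) (i j i' j' : ℕ), P u = some (i, j) → P v = some (i', j') → i ≠ i' →
      ¬ Gt.Adj u v)
    -- vertices of a common cluster have identical G̃-neighborhoods
    (h3 : ∀ (u v : V) (p : ℕ × ℕ), P u = some p → P v = some p →
      Gt.neighborSet u = Gt.neighborSet v)
    -- every (nonempty) cluster has more than εN/(16Δ) and at most 2cεN vertices
    (h4 : ∀ p : ℕ × ℕ, {v : V | P v = some p}.Nonempty →
      ε * N / (16 * (H.maxDegree : ℝ)) < (({v : V | P v = some p}).ncard : ℝ) ∧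
      (({v : V | P v = some p}).ncard : ℝ) ≤ 2 * c * ε * N)
    -- G̃ is ε/8-close to having maximum degree 2cεN
    (hLD : ∃ G' : SimpleGraph V, (∀ v : V, ((G'.neighborSet v).ncard : ℝ) ≤ 2 * c * ε * N) ∧
      (graphDist Gt G' : ℝ) ≤ ε / 8 * N ^ 2)
    -- G̃ is 3ε/8-far from BUC(H)
    (hfar : ∀ G' : SimpleGraph V, IsBlowUpCollection H G' →
      3 * ε / 8 * N ^ 2 < (graphDist Gt G' : ℝ)) :
    ∃ (M : ℕ) (Ws : Fin M → Set V),
      1 / (16 * (W : ℝ) * c ^ 2 * ε) ≤ (M : ℝ) ∧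
      (∀ k l : Fin M, k ≠ l → Disjoint (Ws k) (Ws l)) ∧
      (∀ k : Fin M, ∃ (i : ℕ) (J : Finset ℕ), J.card ≤ W ∧
        Ws k = {v : V | ∃ j ∈ J, P v = some (i, j)}) ∧
      (∀ k : Fin M, ¬ IsBlowUpCollection H (Gt.induce (Ws k))) :=
  many_distinct_witnesses_general H hΔ W hW c ε hc hε Gt N P h1 h2 h4 hLD hfar
end

section
/- Let H be a graph and G a graph. If S is a nonempty set of vertices of G that is a minimal witness against BUC(H) (that is, the subgraph of G induced by S is not a blow-up collection of H, while the subgraph induced by every proper subset of S is a blow-up collection of H), then the subgraph of G induced by S is connected. -/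
open SimpleGraph

lemma isBlowUp_of_map {α α' β : Type*} (H : SimpleGraph β) (G : SimpleGraph α)
    (G' : SimpleGraph α') (g : α → α')
    (hg : ∀ u v, G.Adj u v ↔ G'.Adj (g u) (g v)) (h : IsBlowUp H G') : IsBlowUp H G := by
  obtain ⟨f, hf⟩ := h
  exact ⟨f ∘ g, fun u v => (hg u v).trans (hf _ _)⟩

/-- A nonempty minimal witness against `BUC(H)` induces a connected subgraph. -/
theorem minimal_witness_connected {V β : Type*} (H : SimpleGraph β) (G : SimpleGraph V)
    (S : Set V) (hS : S.Nonempty)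
    (hwit : ¬ IsBlowUpCollection H (G.induce S))
    (hmin : ∀ S' : Set V, S' ⊂ S → IsBlowUpCollection H (G.induce S')) :
    (G.induce S).Connected := by
  classical
  by_contra hnc
  have hne : Nonempty ↥S := hS.to_subtype
  have hpre : ¬ (G.induce S).Preconnected := fun h => hnc (@SimpleGraph.Connected.mk _ _ h hne)
  unfold SimpleGraph.Preconnected at hpre
  push_neg at hpre
  obtain ⟨u, v, huv⟩ := hpre
  set A : Set V := {x | ∃ hx : x ∈ S, (G.induce S).Reachable u ⟨x, hx⟩} with hAdef
  have hAsub : A ⊆ S := fun x hx => hx.1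
  have hkey : ∀ x y : ↥S, G.Adj x.1 y.1 → x.1 ∈ A → y.1 ∈ A := by
    rintro ⟨x, hx⟩ ⟨y, hy⟩ hadj ⟨hx', hr⟩
    exact ⟨hy, hr.trans (SimpleGraph.Adj.reachable (by exact hadj :
      (G.induce S).Adj ⟨x, hx'⟩ ⟨y, hy⟩))⟩
  have hAiff : ∀ x y : ↥S, G.Adj x.1 y.1 → (x.1 ∈ A ↔ y.1 ∈ A) :=
    fun x y h => ⟨hkey x y h, hkey y x h.symm⟩
  have huA : u.1 ∈ A := ⟨u.2, SimpleGraph.Reachable.refl _⟩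
  have hvA : v.1 ∉ A := by
    rintro ⟨hv, hr⟩
    exact huv hr
  have hAss : A ⊂ S := ⟨hAsub, fun h => hvA (h v.2)⟩
  have hBss : S \ A ⊂ S := ⟨Set.diff_subset, fun h => (h u.2).2 huA⟩
  obtain ⟨PA, hPA1, hPA2⟩ := hmin A hAss
  obtain ⟨PB, hPB1, hPB2⟩ := hmin (S \ A) hBss
  apply hwit
  refine ⟨fun x => if hx : x.1 ∈ A then 2 * PA ⟨x.1, hx⟩ else 2 * PB ⟨x.1, ⟨x.2, hx⟩⟩ + 1,
    ?_, ?_⟩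
  · intro x y hadj
    have hiff := hAiff x y hadj
    by_cases hx : x.1 ∈ A
    · have hy : y.1 ∈ A := hiff.mp hx
      simp only [dif_pos hx, dif_pos hy]
      have : PA ⟨x.1, hx⟩ = PA ⟨y.1, hy⟩ := hPA1 _ _ (by exact hadj)
      omega
    · have hy : y.1 ∉ A := fun h => hx (hiff.mpr h)
      simp only [dif_neg hx, dif_neg hy]
      have : PB ⟨x.1, ⟨x.2, hx⟩⟩ = PB ⟨y.1, ⟨y.2, hy⟩⟩ := hPB1 _ _ (by exact hadj)
      omega
  · intro n
    rcases Nat.even_or_odd n with ⟨m, hm⟩ | ⟨m, hm⟩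
    · have hmem : ∀ x : ↥S, (if hx : x.1 ∈ A then 2 * PA ⟨x.1, hx⟩
          else 2 * PB ⟨x.1, ⟨x.2, hx⟩⟩ + 1) = n → ∃ hx : x.1 ∈ A, PA ⟨x.1, hx⟩ = m := by
        intro x hx
        by_cases h : x.1 ∈ A
        · rw [dif_pos h] at hx
          exact ⟨h, by omega⟩
        · rw [dif_neg h] at hx
          omega
      refine isBlowUp_of_map H _ ((G.induce A).induce {y | PA y = m})
        (fun x => ⟨⟨x.1.1, (hmem x.1 x.2).choose⟩, (hmem x.1 x.2).choose_spec⟩)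
        (fun a b => Iff.rfl) (hPA2 m)
    · have hmem : ∀ x : ↥S, (if hx : x.1 ∈ A then 2 * PA ⟨x.1, hx⟩
          else 2 * PB ⟨x.1, ⟨x.2, hx⟩⟩ + 1) = n → ∃ hx : x.1 ∈ S \ A, PB ⟨x.1, hx⟩ = m := by
        intro x hx
        by_cases h : x.1 ∈ A
        · rw [dif_pos h] at hx
          omega
        · rw [dif_neg h] at hx
          exact ⟨⟨x.2, h⟩, by omega⟩
      refine isBlowUp_of_map H _ ((G.induce (S \ A)).induce {y | PB y = m})
        (fun x => ⟨⟨x.1.1, (hmem x.1 x.2).choose⟩, (hmem x.1 x.2).choose_spec⟩)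
        (fun a b => Iff.rfl) (hPB2 m)
end
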